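/- Let U = (U₁,…,U_q) be uniform on the unit sphere of ℝ^q, and let H₁₁ ≥ ⋯ ≥ H_qq > 0. Then for any j ≤ r ≤ q, E[H_jj U_j²/(Σ_{k=1}^q H_kk U_k²)] ≤ (H₁₁/H_rr) · (1/r). -/

import Mathlib

/-!
Permutation matrices are orthogonal, so the coordinates of `U` are exchangeable. Hence the `r + 1`
shares `U i ^ 2 / ∑ k ≤ r, U k ^ 2` with `i ≤ r` all have the same mean; since they sum to at most
`1`, that mean is at most `1 / (r + 1)`. Pointwise, `H j * U j ^ 2 / ∑ k, H k * U k ^ 2` is at most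
`H 0 / H r` times the share of `j`, because `H j ≤ H 0` and the denominator is at least
`H r * ∑ k ≤ r, U k ^ 2`.
-/

open MeasureTheory Finset ProbabilityTheory

theorem Matrix.permMatrix_mem_orthogonalGroup {ι : Type*} [Fintype ι] [DecidableEq ι]
    (σ : Equiv.Perm ι) : σ.permMatrix ℝ ∈ orthogonalGroup ι ℝ := by
  rw [mem_orthogonalGroup_iff, transpose_permMatrix, ← permMatrix_mul, inv_mul_cancel, permMatrix_one]

theorem ProbabilityTheory.IdentDistrib.comp_perm_of_orthogonal_invariant
    {Ω ι : Type*} [MeasurableSpace Ω] {μ : Measure Ω} [Fintype ι] [DecidableEq ι]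
    {U : Ω → ι → ℝ}
    (hU : ∀ O : Matrix.orthogonalGroup ι ℝ,
      IdentDistrib (fun ω => (O : Matrix ι ι ℝ).mulVec (U ω)) U μ μ)
    (σ : Equiv.Perm ι) : IdentDistrib (fun ω => U ω ∘ σ) U μ μ := by
  simpa only [Matrix.permMatrix_mulVec] using hU ⟨_, Matrix.permMatrix_mem_orthogonalGroup σ⟩

/-- Junk value `0` when `v` vanishes on `s`, so the shares over `s` sum to at most `1`. -/
noncomputable def sqShare {ι : Type*} (s : Finset ι) (i : ι) (v : ι → ℝ) : ℝ :=
  v i ^ 2 / ∑ k ∈ s, v k ^ 2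

namespace sqShare

variable {ι : Type*} (s : Finset ι)

theorem nonneg (i : ι) (v : ι → ℝ) : 0 ≤ sqShare s i v :=
  div_nonneg (sq_nonneg _) (sum_nonneg fun _ _ => sq_nonneg _)

theorem le_one {i : ι} (hi : i ∈ s) (v : ι → ℝ) : sqShare s i v ≤ 1 :=
  div_le_one_of_le₀ (single_le_sum (fun k _ => sq_nonneg (v k)) hi)
    (sum_nonneg fun _ _ => sq_nonneg _)

theorem sum_le_one (v : ι → ℝ) : ∑ i ∈ s, sqShare s i v ≤ 1 := by
  simp only [sqShare, ← sum_div]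
  exact div_self_le_one _

theorem measurable (i : ι) : Measurable (sqShare s i) :=
  ((measurable_pi_apply i).pow_const 2).div
    (Finset.measurable_sum _ fun k _ => (measurable_pi_apply k).pow_const 2)

theorem comp_perm {σ : Equiv.Perm ι} (hσ : {a | σ a ≠ a} ⊆ s) (i : ι) (v : ι → ℝ) :
    sqShare s i (v ∘ σ) = sqShare s (σ i) v := by
  simp only [sqShare, Function.comp_apply, σ.sum_comp s (fun k => v k ^ 2) hσ]


end sqShare

section Exchangeable

variable {Ω ι : Type*} [MeasurableSpace Ω] {μ : Measure Ω} {U : Ω → ι → ℝ}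

theorem integrable_sqShare_comp [IsFiniteMeasure μ] (hU : AEMeasurable U μ) {s : Finset ι}
    {i : ι} (hi : i ∈ s) : Integrable (fun ω => sqShare s i (U ω)) μ := by
  refine .of_bound ((sqShare.measurable s i).comp_aemeasurable hU).aestronglyMeasurable 1
    (.of_forall fun ω => ?_)
  rw [Real.norm_of_nonneg (sqShare.nonneg s i _)]
  exact sqShare.le_one s hi _

theorem integral_sqShare_comp_eq [DecidableEq ι]
    (hU : ∀ σ : Equiv.Perm ι, IdentDistrib (fun ω => U ω ∘ σ) U μ μ)
    {s : Finset ι} {i j : ι} (hi : i ∈ s) (hj : j ∈ s) :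
    ∫ ω, sqShare s i (U ω) ∂μ = ∫ ω, sqShare s j (U ω) ∂μ := by
  have hswap : {a | Equiv.swap i j a ≠ a} ⊆ s := fun a ha => by
    obtain ⟨-, rfl | rfl⟩ := Equiv.swap_apply_ne_self_iff.1 ha <;> assumption
  have := ((hU (Equiv.swap i j)).comp (sqShare.measurable s j)).integral_eq
  simpa only [Function.comp_apply, sqShare.comp_perm s hswap, Equiv.swap_apply_right] using this

theorem integral_sqShare_comp_le [DecidableEq ι] [IsProbabilityMeasure μ]
    (hU : ∀ σ : Equiv.Perm ι, IdentDistrib (fun ω => U ω ∘ σ) U μ μ)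
    {s : Finset ι} {j : ι} (hj : j ∈ s) :
    ∫ ω, sqShare s j (U ω) ∂μ ≤ 1 / #s := by
  have hUmeas : AEMeasurable U μ := (hU 1).aemeasurable_snd
  have hint : ∀ i ∈ s, Integrable (fun ω => sqShare s i (U ω)) μ :=
    fun i hi => integrable_sqShare_comp hUmeas hi
  have hsum : #s * ∫ ω, sqShare s j (U ω) ∂μ ≤ 1 := calc
    #s * ∫ ω, sqShare s j (U ω) ∂μ = ∑ i ∈ s, ∫ ω, sqShare s i (U ω) ∂μ := by
      rw [sum_congr rfl fun i hi => integral_sqShare_comp_eq hU hi hj, sum_const, nsmul_eq_mul]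
    _ = ∫ ω, ∑ i ∈ s, sqShare s i (U ω) ∂μ := (integral_finsetSum s hint).symm
    _ ≤ ∫ _, (1 : ℝ) ∂μ :=
      integral_mono (integrable_finsetSum s hint) (integrable_const 1)
        fun ω => sqShare.sum_le_one s (U ω)
    _ = 1 := by simp
  rw [le_div_iff₀ (by exact_mod_cast card_pos.2 ⟨j, hj⟩)]
  linarith

end Exchangeable

theorem mul_sq_div_weighted_sum_sq_le {ι : Type*} [Fintype ι] {H : ι → ℝ} (hH : ∀ k, 0 ≤ H k)
    {s : Finset ι} {j : ι} (hj : j ∈ s) {m M : ℝ} (hm : 0 < m) (hmH : ∀ k ∈ s, m ≤ H k)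
    (hHM : H j ≤ M) (v : ι → ℝ) :
    H j * v j ^ 2 / ∑ k, H k * v k ^ 2 ≤ M / m * sqShare s j v := by
  set S := ∑ k ∈ s, v k ^ 2
  have hmS : m * S ≤ ∑ k, H k * v k ^ 2 := calc
    m * S = ∑ k ∈ s, m * v k ^ 2 := mul_sum _ _ _
    _ ≤ ∑ k ∈ s, H k * v k ^ 2 :=
      sum_le_sum fun k hk => mul_le_mul_of_nonneg_right (hmH k hk) (sq_nonneg _)
    _ ≤ ∑ k, H k * v k ^ 2 :=
      sum_le_sum_of_subset_of_nonneg (subset_univ s) fun k _ _ => mul_nonneg (hH k) (sq_nonneg _)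
  rcases (sum_nonneg fun k _ => sq_nonneg (v k) : 0 ≤ S).eq_or_lt with hS | hS
  · have hvj : v j ^ 2 = 0 := (sum_eq_zero_iff_of_nonneg fun k _ => sq_nonneg (v k)).1 hS.symm j hj
    simp [sqShare, hvj]
  · calc H j * v j ^ 2 / ∑ k, H k * v k ^ 2 ≤ M * v j ^ 2 / (m * S) :=
          div_le_div₀ (mul_nonneg ((hH j).trans hHM) (sq_nonneg _))
            (mul_le_mul_of_nonneg_right hHM (sq_nonneg _)) (mul_pos hm hS) hmS
      _ = M / m * sqShare s j v := by rw [sqShare, div_mul_div_comm]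

theorem kendall_eig_upper_bound_general
    {Ω : Type*} [MeasurableSpace Ω] (μ : Measure Ω) [IsProbabilityMeasure μ]
    {q : ℕ} [NeZero q] (U : Ω → Fin q → ℝ)
    -- `U` is uniform on the unit sphere of ℝ^q :
    (hUunif : ∀ O : Matrix.orthogonalGroup (Fin q) ℝ,
      ProbabilityTheory.IdentDistrib (fun ω => (O : Matrix (Fin q) (Fin q) ℝ).mulVec (U ω)) U μ μ)
    (H : Fin q → ℝ) (hHpos : ∀ k, 0 < H k) (hH : Antitone H)
    (j r : Fin q) (hjr : j ≤ r) :
    ∫ ω, (H j * U ω j ^ 2) / (∑ k, H k * U ω k ^ 2) ∂μ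
      ≤ (H 0 / H r) * (1 / ((r : ℕ) + 1)) := by
  have hj : j ∈ Iic r := mem_Iic.2 hjr
  have hexch := IdentDistrib.comp_perm_of_orthogonal_invariant hUunif
  have hpt (ω : Ω) := mul_sq_div_weighted_sum_sq_le (fun k => (hHpos k).le) hj (hHpos r)
    (fun k hk => hH (mem_Iic.1 hk)) (hH (Fin.zero_le j)) (U ω)
  have hnonneg (ω : Ω) : 0 ≤ H j * U ω j ^ 2 / ∑ k, H k * U ω k ^ 2 :=
    div_nonneg (mul_nonneg (hHpos j).le (sq_nonneg _))
      (sum_nonneg fun k _ => mul_nonneg (hHpos k).le (sq_nonneg _))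
  have hshare := integral_sqShare_comp_le hexch hj
  rw [Fin.card_Iic] at hshare
  calc ∫ ω, H j * U ω j ^ 2 / ∑ k, H k * U ω k ^ 2 ∂μ
      ≤ ∫ ω, H 0 / H r * sqShare (Iic r) j (U ω) ∂μ :=
        integral_mono_of_nonneg (.of_forall hnonneg)
          ((integrable_sqShare_comp (hexch 1).aemeasurable_snd hj).const_mul _) (.of_forall hpt)
    _ = H 0 / H r * ∫ ω, sqShare (Iic r) j (U ω) ∂μ := integral_const_mul _ _
    _ ≤ H 0 / H r * (1 / ((r : ℕ) + 1)) := by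
        gcongr
        · exact div_nonneg (hHpos 0).le (hHpos r).le
        · exact_mod_cast hshare

theorem kendall_eig_upper_bound
    {Ω : Type*} [MeasurableSpace Ω] (μ : Measure Ω) [IsProbabilityMeasure μ]
    {q : ℕ} [NeZero q] (U : Ω → Fin q → ℝ) (hUmeas : Measurable U)
    -- `U` is uniform on the unit sphere of ℝ^q :
    (hUsphere : ∀ᵐ ω ∂μ, ∑ k, U ω k ^ 2 = 1)
    (hUunif : ∀ O : Matrix.orthogonalGroup (Fin q) ℝ,
      ProbabilityTheory.IdentDistrib (fun ω => (O : Matrix (Fin q) (Fin q) ℝ).mulVec (U ω)) U μ μ)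
    (H : Fin q → ℝ) (hHpos : ∀ k, 0 < H k) (hH : Antitone H)
    (j r : Fin q) (hjr : j ≤ r) :
    ∫ ω, (H j * U ω j ^ 2) / (∑ k, H k * U ω k ^ 2) ∂μ
      ≤ (H 0 / H r) * (1 / ((r : ℕ) + 1)) :=
  kendall_eig_upper_bound_general μ U hUunif H hHpos hH j r hjr
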